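/- Let G be a simple graph on n vertices with double star sequence S_{i,j}(G) and double star frequency numbers f_{a,b}. Then for 0 ≤ a < b ≤ n−2: f_{a,b} = ∑_{i=0}^{n−2} ∑_{j=i}^{n−2} (−1)^{a+b+i+j} (C(i,a)C(j,b) + C(i,b)C(j,a)) S_{i,j}(G). -/

import Mathlib

open Finset

variable {V : Type*} [Fintype V] [DecidableEq V]

/-- Sum over the edges of `G` of a symmetric function of the endpoint degrees. -/
def edgeSum (G : SimpleGraph V) [DecidableRel G.Adj] {R : Type*} [AddCommMonoid R] (f : ℕ → ℕ → R)
    (hf : ∀ x y, f x y = f y x) : R :=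
  ∑ e ∈ G.edgeFinset, Sym2.lift ⟨fun u v => f (G.degree u) (G.degree v),
    fun _ _ => hf _ _⟩ e

/-- The double star sequence `S_{a,b}(G)`. -/
def dstar (G : SimpleGraph V) [DecidableRel G.Adj] (a b : ℕ) : ℕ :=
  if a = b then
    edgeSum G (fun du dv => (du - 1).choose a * (dv - 1).choose a) (fun x y => by ring)
  else
    edgeSum G (fun du dv => (du - 1).choose a * (dv - 1).choose b
      + (du - 1).choose b * (dv - 1).choose a) (fun x y => by ring)

/-- `dfreq G i j` is the number of edges of `G` whose endpoint degrees are `i+1` and `j+1`. -/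
def dfreq (G : SimpleGraph V) [DecidableRel G.Adj] (i j : ℕ) : ℕ :=
  (G.edgeFinset.filter fun e =>
    Sym2.lift ⟨fun u v => ({G.degree u, G.degree v} : Multiset ℕ),
      fun _ _ => Multiset.cons_swap _ _ _⟩ e = ({i + 1, j + 1} : Multiset ℕ)).card

/-- The general second Zagreb index `M₂⁽ᵖ⁾(G)`. -/
def zagreb2 (G : SimpleGraph V) [DecidableRel G.Adj] (p : ℕ) : ℕ :=
  edgeSum G (fun du dv => (du * dv) ^ p) (fun x y => by ring)

/-!
Both sides are sums over the edges. An edge whose endpoints have degrees `x + 1` and `y + 1`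
contributes `C(x,i) C(y,j) + C(x,j) C(y,i)` to `S_{i,j}` (only `C(x,i) C(y,i)` when `i = j`).
Since the coefficients are symmetric in `i, j`, the sum over the triangle `i ≤ j` unfolds to
the full square, which factors into one-variable binomial inversions
`∑ i, (-1)^(c+i) C(i,c) C(x,i) = [x = c]`. What remains is `[x = a][y = b] + [x = b][y = a]`,
and for `a ≠ b` this is the indicator that the edge is counted by `f_{a,b}`.
-/

lemma Multiset.pair_eq_pair_iff {α : Type*} {p q r s : α} :
    ({p, q} : Multiset α) = {r, s} ↔ p = r ∧ q = s ∨ p = s ∧ q = r := by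
  simp only [Multiset.insert_eq_cons, Multiset.cons_eq_cons, Multiset.singleton_inj,
    Multiset.singleton_eq_cons_iff]
  grind

theorem sum_range_neg_one_pow_mul_choose_mul_choose {M x : ℕ} (c : ℕ) (hx : x < M) :
    ∑ i ∈ range M, (-1 : ℤ) ^ (c + i) * i.choose c * x.choose i = if x = c then 1 else 0 := by
  rw [← sum_subset (range_subset_range.2 hx : range (x + 1) ⊆ range M) fun i _ hi => by
    rw [Nat.choose_eq_zero_of_lt (n := x) (by simpa using hi), Nat.cast_zero, mul_zero]]
  rcases lt_or_ge x c with hxc | hcx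
  · rw [if_neg hxc.ne]
    refine sum_eq_zero fun i hi => ?_
    rw [Nat.choose_eq_zero_of_lt (n := i) (by simp at hi; omega), Nat.cast_zero, mul_zero,
      zero_mul]
  obtain ⟨d, rfl⟩ := Nat.exists_eq_add_of_le hcx
  rw [add_assoc, sum_range_add, sum_eq_zero fun i hi => by
    rw [Nat.choose_eq_zero_of_lt (n := i) (mem_range.1 hi), Nat.cast_zero, mul_zero, zero_mul]]
  have hterm : ∀ k, (-1 : ℤ) ^ (c + (c + k)) * (c + k).choose c * (c + d).choose (c + k)
      = (c + d).choose c * ((-1) ^ k * d.choose k) := by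
    intro k
    have h := Nat.choose_mul (n := c + d) (Nat.le_add_right c k)
    simp only [Nat.add_sub_cancel_left] at h
    have h' : ((c + d).choose (c + k) : ℤ) * (c + k).choose c
        = (c + d).choose c * d.choose k := by
      exact_mod_cast h
    rw [← add_assoc, ← two_mul, pow_add, pow_mul, neg_one_sq, one_pow, one_mul]
    linear_combination (-1 : ℤ) ^ k * h'
  simp only [hterm, ← mul_sum, Int.alternating_sum_range_choose, zero_add]
  by_cases hd : d = 0 <;> simp [hd]

theorem sum_range_sum_range_neg_one_pow_mul_choose_mul_choose {M x y : ℕ} (a b : ℕ)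
    (hx : x < M) (hy : y < M) :
    ∑ i ∈ range M, ∑ j ∈ range M, (-1 : ℤ) ^ (a + b + i + j) *
        (i.choose a * j.choose b + i.choose b * j.choose a) * (x.choose i * y.choose j)
      = (if x = a then 1 else 0) * (if y = b then 1 else 0)
        + (if x = b then 1 else 0) * (if y = a then 1 else 0) := by
  have hsplit : ∀ i j : ℕ, (-1 : ℤ) ^ (a + b + i + j) *
        (i.choose a * j.choose b + i.choose b * j.choose a) * (x.choose i * y.choose j)
      = (-1 : ℤ) ^ (a + i) * i.choose a * x.choose i *
          ((-1 : ℤ) ^ (b + j) * j.choose b * y.choose j)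
        + (-1 : ℤ) ^ (b + i) * i.choose b * x.choose i *
          ((-1 : ℤ) ^ (a + j) * j.choose a * y.choose j) := by
    intro i j
    simp only [pow_add]
    ring
  simp only [hsplit, sum_add_distrib, ← mul_sum, ← sum_mul,
    sum_range_neg_one_pow_mul_choose_mul_choose _ hx,
    sum_range_neg_one_pow_mul_choose_mul_choose _ hy]

theorem Finset.sum_range_sum_Ico_ite_add_swap {β : Type*} [AddCommMonoid β]
    (h : ℕ → ℕ → β) (M : ℕ) :
    ∑ i ∈ range M, ∑ j ∈ Ico i M, (if i = j then h i j else h i j + h j i)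
      = ∑ i ∈ range M, ∑ j ∈ range M, h i j := by
  induction M with
  | zero => simp
  | succ M ih =>
    have hIco : ∀ i ∈ range M, ∑ j ∈ Ico i (M + 1), (if i = j then h i j else h i j + h j i)
        = ∑ j ∈ Ico i M, (if i = j then h i j else h i j + h j i) + (h i M + h M i) := by
      intro i hi
      rw [sum_Ico_succ_top (mem_range.1 hi).le, if_neg (mem_range.1 hi).ne]
    rw [sum_range_succ, sum_congr rfl hIco, sum_add_distrib, ih, Nat.Ico_succ_singleton,
      sum_singleton, if_pos rfl]
    simp only [sum_range_succ, sum_add_distrib]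
    abel

def dstarTerm (i j du dv : ℕ) : ℕ :=
  if i = j then (du - 1).choose i * (dv - 1).choose i
  else (du - 1).choose i * (dv - 1).choose j + (du - 1).choose j * (dv - 1).choose i

theorem dstarTerm_comm (i j du dv : ℕ) : dstarTerm i j du dv = dstarTerm i j dv du := by
  unfold dstarTerm
  split_ifs <;> ring

theorem sum_range_sum_Ico_mul_dstarTerm {M x y a b : ℕ} (hab : a ≠ b) (hx : x < M)
    (hy : y < M) :
    ∑ i ∈ range M, ∑ j ∈ Ico i M, (-1 : ℤ) ^ (a + b + i + j) *
        (i.choose a * j.choose b + i.choose b * j.choose a) * (dstarTerm i j (x + 1) (y + 1) : ℤ)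
      = if ({x + 1, y + 1} : Multiset ℕ) = {a + 1, b + 1} then 1 else 0 := by
  set coeff : ℕ → ℕ → ℤ := fun i j =>
    (-1 : ℤ) ^ (a + b + i + j) * (i.choose a * j.choose b + i.choose b * j.choose a)
  have hcoeff : ∀ i j, coeff j i = coeff i j := fun i j => by simp only [coeff]; ring_nf
  have hterm : ∀ i j, coeff i j * (dstarTerm i j (x + 1) (y + 1) : ℤ)
      = if i = j then coeff i j * (x.choose i * y.choose j)
        else coeff i j * (x.choose i * y.choose j) + coeff j i * (x.choose j * y.choose i) := by
    intro i j
    rw [hcoeff, dstarTerm]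
    split_ifs with hij
    · subst hij; push_cast; simp
    · push_cast; ring
  simp only [coeff] at hterm
  simp only [hterm, coeff,
    sum_range_sum_Ico_ite_add_swap (fun i j => coeff i j * (x.choose i * y.choose j)),
    sum_range_sum_range_neg_one_pow_mul_choose_mul_choose a b hx hy,
    Multiset.pair_eq_pair_iff, add_left_inj]
  split_ifs <;> omega

section edgeSum

omit [DecidableEq V]

variable (G : SimpleGraph V) [DecidableRel G.Adj] {R : Type*}

theorem edgeSum_congr [AddCommMonoid R] {f g : ℕ → ℕ → R} (hf : ∀ x y, f x y = f y x)
    (hg : ∀ x y, g x y = g y x)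
    (h : ∀ u v, G.Adj u v → f (G.degree u) (G.degree v) = g (G.degree u) (G.degree v)) :
    edgeSum G f hf = edgeSum G g hg := by
  refine sum_congr rfl fun e he => ?_
  induction e using Sym2.ind with
  | _ u v => exact h u v (G.mem_edgeFinset.1 he)

theorem sum_edgeSum [AddCommMonoid R] {ι : Type*} (s : Finset ι) (f : ι → ℕ → ℕ → R)
    (hf : ∀ k x y, f k x y = f k y x) :
    ∑ k ∈ s, edgeSum G (f k) (hf k)
      = edgeSum G (fun x y => ∑ k ∈ s, f k x y)
          (fun x y => sum_congr rfl fun k _ => hf k x y) := by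
  simp only [edgeSum]
  rw [sum_comm]
  refine sum_congr rfl fun e _ => ?_
  induction e using Sym2.ind with
  | _ u v => simp only [Sym2.lift_mk]

theorem mul_edgeSum [NonUnitalNonAssocSemiring R] (c : R) (f : ℕ → ℕ → R)
    (hf : ∀ x y, f x y = f y x) :
    c * edgeSum G f hf = edgeSum G (fun x y => c * f x y) (fun x y => by rw [hf]) := by
  rw [edgeSum, edgeSum, mul_sum]
  refine sum_congr rfl fun e _ => ?_
  induction e using Sym2.ind with
  | _ u v => simp only [Sym2.lift_mk]

theorem natCast_edgeSum [AddCommMonoidWithOne R] (f : ℕ → ℕ → ℕ) (hf : ∀ x y, f x y = f y x) :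
    ((edgeSum G f hf : ℕ) : R)
      = edgeSum G (fun x y => (f x y : R)) (fun x y => by rw [hf]) := by
  rw [edgeSum, edgeSum, Nat.cast_sum]
  refine sum_congr rfl fun e _ => ?_
  induction e using Sym2.ind with
  | _ u v => simp only [Sym2.lift_mk]

theorem dstar_eq_edgeSum (i j : ℕ) :
    dstar G i j = edgeSum G (dstarTerm i j) (dstarTerm_comm i j) := by
  unfold dstar dstarTerm
  split_ifs <;> rfl

theorem natCast_dfreq_eq_edgeSum [AddCommMonoidWithOne R] (a b : ℕ) :
    (dfreq G a b : R)
      = edgeSum G (fun x y => if ({x, y} : Multiset ℕ) = {a + 1, b + 1} then 1 else 0)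
          (fun x y => by rw [Multiset.pair_comm]) := by
  rw [dfreq, card_filter, Nat.cast_sum, edgeSum]
  refine sum_congr rfl fun e _ => ?_
  induction e using Sym2.ind with
  | _ u v => rw [Sym2.lift_mk, Sym2.lift_mk, Nat.cast_ite, Nat.cast_one, Nat.cast_zero]

end edgeSum

theorem dfreq_eq_alt_sum_dstar_general (G : SimpleGraph V) [DecidableRel G.Adj]
    (n : ℕ) (hn : n = Fintype.card V) (a b : ℕ) (hab : a < b) :
    (dfreq G a b : ℤ) = ∑ i ∈ Finset.range (n - 1), ∑ j ∈ Finset.Icc i (n - 2),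
      (-1 : ℤ) ^ (a + b + i + j) *
        ((i.choose a) * (j.choose b) + (i.choose b) * (j.choose a)) * dstar G i j := by
  have hIcc : ∀ i ∈ range (n - 1), Icc i (n - 2) = Ico i (n - 1) := fun i hi => by
    ext j; simp only [mem_Icc, mem_Ico]; have := mem_range.1 hi; omega
  rw [sum_congr rfl fun i hi => by rw [hIcc i hi]]
  simp only [dstar_eq_edgeSum, natCast_edgeSum, mul_edgeSum, sum_edgeSum,
    natCast_dfreq_eq_edgeSum]
  refine edgeSum_congr G _ _ fun u v huv => ?_
  have hdeg : ∀ w z, G.Adj w z → ∃ x, G.degree w = x + 1 ∧ x < n - 1 := fun w z hwz => by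
    have := G.degree_lt_card_verts w
    have := (G.degree_pos_iff_exists_adj w).2 ⟨z, hwz⟩
    exact ⟨G.degree w - 1, by omega, by omega⟩
  obtain ⟨x, hxu, hx⟩ := hdeg u v huv
  obtain ⟨y, hyv, hy⟩ := hdeg v u huv.symm
  rw [hxu, hyv]
  exact (sum_range_sum_Ico_mul_dstarTerm hab.ne hx hy).symm

theorem dfreq_eq_alt_sum_dstar (G : SimpleGraph V) [DecidableRel G.Adj]
    (n : ℕ) (hn : n = Fintype.card V) (a b : ℕ) (hab : a < b) (hb : b ≤ n - 2) :
    (dfreq G a b : ℤ) = ∑ i ∈ Finset.range (n - 1), ∑ j ∈ Finset.Icc i (n - 2),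
      (-1 : ℤ) ^ (a + b + i + j) *
        ((i.choose a) * (j.choose b) + (i.choose b) * (j.choose a)) * dstar G i j :=
  dfreq_eq_alt_sum_dstar_general G n hn a b hab
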